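/- arXiv:2311.01410 — 2 statements merged into one kernel-verified Lean document; each statement's English description precedes it below -/
import Mathlib

section
/- Let k : ℝ^m × ℝ^n → ℝ be a measurable function with k(x,y) > 0 for all (x,y) and ∫ k(x,y) dy = 1 for every x (with respect to Lebesgue measure on ℝ^n), and let κ be the Markov kernel from ℝ^m to ℝ^n defined by κ(x) = (Lebesgue measure on ℝ^n).withDensity(k(x,·)). Let μ̃ and μ be probability measures on ℝ^m that have everywhere strictly positive densities with respect to Lebesgue measure, with μ̃ ≠ μ and D_KL(μ̃ ‖ μ) < ∞. Then D_KL(μ̃.bind κ ‖ μ.bind κ) < D_KL(μ̃ ‖ μ), i.e. passing both measures through the kernel κ strictly decreases their Kullback–Leibler divergence. -/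
open MeasureTheory ProbabilityTheory
open scoped ENNReal NNReal Classical

/-- The Kullback–Leibler divergence between two measures. -/

noncomputable def klDiv {α : Type*} [MeasurableSpace α] (μ ν : Measure α) : ℝ≥0∞ :=
  if μ ≪ ν ∧ Integrable (llr μ ν) μ then ENNReal.ofReal (∫ x, llr μ ν x ∂μ) else ⊤

/-!
Write `R = dμ'/dμ` and `klFun t = t log t + 1 - t`. For an output `y`, the posterior
`η_y(dx) ∝ K(x, y) μ(dx)` disintegrates `μ ⊗ κ` over `μ.bind κ`, and the density of `μ'.bind κ`
with respect to `μ.bind κ` at `y` is the posterior mean `η_y[R]`. Hence the output divergence is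
`∫ klFun (η_y[R]) d(μ.bind κ)(y)`, while the input divergence is `∫ η_y[klFun R] d(μ.bind κ)(y)`.
As `K > 0`, each `η_y` is equivalent to `μ`, so `R` is not `η_y`-a.e. constant when `μ' ≠ μ`, and
strict Jensen for `klFun` compares the integrands strictly. The data processing inequality makes
the output divergence finite, so the strict comparison survives integration.
-/

lemma klDiv_eq_informationTheory_klDiv {α : Type*} [MeasurableSpace α] (μ ν : Measure α)
    [IsProbabilityMeasure μ] [IsProbabilityMeasure ν] :
    klDiv μ ν = InformationTheory.klDiv μ ν := by
  by_cases h : μ ≪ ν ∧ Integrable (llr μ ν) μ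
  · simp [klDiv, h, InformationTheory.klDiv_of_ac_of_integrable h.1 h.2]
  · rw [klDiv, if_neg h, eq_comm, InformationTheory.klDiv_eq_top_iff]
    exact fun hac hint => h ⟨hac, hint⟩

lemma MeasureTheory.Measure.not_toReal_rnDeriv_ae_eq_const {α : Type*} [MeasurableSpace α]
    {μ' μ : Measure α} [IsProbabilityMeasure μ'] [IsProbabilityMeasure μ] (hμ'μ : μ' ≪ μ)
    (hne : μ' ≠ μ) (c : ℝ) : ¬ (fun x => (μ'.rnDeriv μ x).toReal) =ᵐ[μ] fun _ => c := by
  intro h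
  have h_rn : μ'.rnDeriv μ =ᵐ[μ] fun _ => ENNReal.ofReal c := by
    filter_upwards [h, Measure.rnDeriv_lt_top μ' μ] with x hx h_lt
    rw [← hx, ENNReal.ofReal_toReal h_lt.ne]
  have hc : ENNReal.ofReal c = 1 := by
    simpa [lintegral_congr_ae h_rn] using Measure.lintegral_rnDeriv hμ'μ
  exact hne ((Measure.rnDeriv_eq_one_iff_eq hμ'μ).1 (h_rn.trans (.of_forall fun _ => hc)))

namespace InformationTheory

variable {α : Type*} [MeasurableSpace α]

lemma ofReal_klFun_integral_lt_lintegral {η : Measure α} [IsProbabilityMeasure η] {f : α → ℝ}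
    (hf_nonneg : ∀ᵐ x ∂η, 0 ≤ f x) (hf_int : Integrable f η)
    (hf_nonconst : ∀ c, ¬ f =ᵐ[η] fun _ => c) :
    ENNReal.ofReal (klFun (∫ x, f x ∂η)) < ∫⁻ x, ENNReal.ofReal (klFun (f x)) ∂η := by
  have h_meas : AEStronglyMeasurable (fun x => klFun (f x)) η :=
    continuous_klFun.comp_aestronglyMeasurable hf_int.aestronglyMeasurable
  have h_klFun_nonneg : 0 ≤ᵐ[η] fun x => klFun (f x) := by
    filter_upwards [hf_nonneg] with x hx using klFun_nonneg hx
  by_cases h_int : Integrable (fun x => klFun (f x)) η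
  · rcases strictConvexOn_klFun.ae_eq_const_or_map_average_lt continuous_klFun.continuousOn
      isClosed_Ici hf_nonneg hf_int h_int with h_const | h_lt
    · exact absurd h_const (hf_nonconst _)
    rw [average_eq_integral, average_eq_integral] at h_lt
    rw [← ofReal_integral_eq_lintegral_ofReal h_int h_klFun_nonneg]
    exact (ENNReal.ofReal_lt_ofReal_iff_of_nonneg
      (klFun_nonneg (integral_nonneg_of_ae hf_nonneg))).2 h_lt
  · rw [← lintegral_ofReal_ne_top_iff_integrable h_meas h_klFun_nonneg, not_ne_iff] at h_int
    rw [h_int]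
    exact ENNReal.ofReal_lt_top

end InformationTheory

namespace ProbabilityTheory

variable {α β : Type*} [MeasurableSpace α]

/-- The Bayesian posterior of `x` given `y`, for the prior `μ` and the likelihood `K · y`; it is the
zero measure when the normalizing integral is `0` or `∞`. -/
noncomputable def densityPosterior (μ : Measure α) (K : α → β → ℝ≥0∞) (y : β) : Measure α :=
  (∫⁻ x, K x y ∂μ)⁻¹ • μ.withDensity (fun x => K x y)

variable {μ : Measure α} {K : α → β → ℝ≥0∞}

lemma isProbabilityMeasure_densityPosterior {y : β} (h0 : ∫⁻ x, K x y ∂μ ≠ 0)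
    (htop : ∫⁻ x, K x y ∂μ ≠ ∞) : IsProbabilityMeasure (densityPosterior μ K y) := by
  constructor
  rw [densityPosterior, Measure.smul_apply, withDensity_apply _ MeasurableSet.univ,
    setLIntegral_univ, smul_eq_mul, ENNReal.inv_mul_cancel h0 htop]

lemma densityPosterior_absolutelyContinuous (y : β) : densityPosterior μ K y ≪ μ :=
  (withDensity_absolutelyContinuous _ _).smul_left _

variable [MeasurableSpace β] {Q : Measure β} {κ : Kernel α β}

lemma absolutelyContinuous_densityPosterior (hK : Measurable (Function.uncurry K)) {y : β}
    (hK0 : ∀ x, K x y ≠ 0) (htop : ∫⁻ x, K x y ∂μ ≠ ∞) : μ ≪ densityPosterior μ K y :=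
  (withDensity_absolutelyContinuous' hK.of_uncurry_right.aemeasurable (ae_of_all _ hK0)).trans
    (Measure.absolutelyContinuous_smul (ENNReal.inv_ne_zero.2 htop))

lemma lintegral_densityPosterior (hK : Measurable (Function.uncurry K)) (y : β) {h : α → ℝ≥0∞}
    (hh : Measurable h) :
    ∫⁻ x, h x ∂(densityPosterior μ K y) = (∫⁻ x, K x y ∂μ)⁻¹ * ∫⁻ x, K x y * h x ∂μ := by
  rw [densityPosterior, lintegral_smul_measure, smul_eq_mul,
    lintegral_withDensity_eq_lintegral_mul _ hK.of_uncurry_right hh]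
  rfl

lemma measurable_lintegral_densityPosterior [SFinite μ] (hK : Measurable (Function.uncurry K))
    {h : α → β → ℝ≥0∞} (hh : Measurable (Function.uncurry h)) :
    Measurable fun y => ∫⁻ x, h x y ∂(densityPosterior μ K y) := by
  have h_eq (y : β) := lintegral_densityPosterior (μ := μ) hK y (hh.of_uncurry_right (y := y))
  simp_rw [h_eq]
  exact hK.lintegral_prod_left'.inv.mul (hK.mul hh).lintegral_prod_left'

lemma bind_eq_withDensity_lintegral [SFinite μ] [SFinite Q] (hK : Measurable (Function.uncurry K))
    (hκ : ∀ x, κ x = Q.withDensity (K x)) :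
    μ.bind κ = Q.withDensity (fun y => ∫⁻ x, K x y ∂μ) := by
  ext s hs
  simp_rw [Measure.bind_apply hs κ.aemeasurable, withDensity_apply _ hs, hκ, withDensity_apply _ hs]
  exact lintegral_lintegral_swap hK.aemeasurable

lemma ae_lintegral_lt_top [IsFiniteMeasure μ] [IsFiniteKernel κ] [SFinite Q]
    (hK : Measurable (Function.uncurry K)) (hκ : ∀ x, κ x = Q.withDensity (K x)) :
    ∀ᵐ y ∂Q, ∫⁻ x, K x y ∂μ < ∞ := by
  refine ae_lt_top hK.lintegral_prod_left' ?_
  rw [← setLIntegral_univ, ← withDensity_apply _ MeasurableSet.univ,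
    ← bind_eq_withDensity_lintegral hK hκ]
  exact measure_ne_top _ _

lemma ae_bind_lintegral_ne_zero_ne_top [IsFiniteMeasure μ] [IsFiniteKernel κ] [SFinite Q]
    (hK : Measurable (Function.uncurry K)) (hκ : ∀ x, κ x = Q.withDensity (K x)) :
    ∀ᵐ y ∂(μ.bind κ), ∫⁻ x, K x y ∂μ ≠ 0 ∧ ∫⁻ x, K x y ∂μ ≠ ∞ := by
  have hG : Measurable fun y => ∫⁻ x, K x y ∂μ := hK.lintegral_prod_left'
  rw [bind_eq_withDensity_lintegral hK hκ, ae_withDensity_iff hG]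
  filter_upwards [ae_lintegral_lt_top (μ := μ) hK hκ] with y hy h0 using ⟨h0, hy.ne⟩

lemma lintegral_bind_densityPosterior [IsFiniteMeasure μ] [IsFiniteKernel κ] [SFinite Q]
    (hK : Measurable (Function.uncurry K)) (hκ : ∀ x, κ x = Q.withDensity (K x))
    {h : α → β → ℝ≥0∞} (hh : Measurable (Function.uncurry h)) :
    ∫⁻ y, ∫⁻ x, h x y ∂(densityPosterior μ K y) ∂(μ.bind κ) = ∫⁻ x, ∫⁻ y, h x y ∂(κ x) ∂μ := by
  set G : β → ℝ≥0∞ := fun y => ∫⁻ x, K x y ∂μ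
  have hG : Measurable G := hK.lintegral_prod_left'
  calc ∫⁻ y, ∫⁻ x, h x y ∂(densityPosterior μ K y) ∂(μ.bind κ)
      = ∫⁻ y, G y * ∫⁻ x, h x y ∂(densityPosterior μ K y) ∂Q := by
        rw [bind_eq_withDensity_lintegral hK hκ, lintegral_withDensity_eq_lintegral_mul _ hG
          (measurable_lintegral_densityPosterior hK hh)]
        rfl
    _ = ∫⁻ y, ∫⁻ x, K x y * h x y ∂μ ∂Q := by
        refine lintegral_congr_ae ?_
        filter_upwards [ae_lintegral_lt_top (μ := μ) hK hκ] with y hy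
        rw [lintegral_densityPosterior hK y hh.of_uncurry_right, ← mul_assoc]
        rcases eq_or_ne (G y) 0 with hG0 | hG0
        · have hI : ∫⁻ x, K x y * h x y ∂μ = 0 := by
            rw [lintegral_eq_zero_iff hK.of_uncurry_right] at hG0
            exact lintegral_eq_zero_of_ae_eq_zero (by filter_upwards [hG0] with x hx; simp [hx])
          rw [hI, mul_zero]
        · rw [ENNReal.mul_inv_cancel hG0 hy.ne, one_mul]
    _ = ∫⁻ x, ∫⁻ y, K x y * h x y ∂Q ∂μ :=
        lintegral_lintegral_swap ((hK.mul hh).comp measurable_swap).aemeasurable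
    _ = ∫⁻ x, ∫⁻ y, h x y ∂(κ x) ∂μ := by
        simp_rw [hκ]
        congr with x
        exact (lintegral_withDensity_eq_lintegral_mul _ hK.of_uncurry_left hh.of_uncurry_left).symm

lemma bind_eq_withDensity_lintegral_rnDeriv [IsFiniteMeasure μ] [IsFiniteKernel κ] [SFinite Q]
    (hK : Measurable (Function.uncurry K)) (hκ : ∀ x, κ x = Q.withDensity (K x))
    {μ' : Measure α} [IsFiniteMeasure μ'] (hμ'μ : μ' ≪ μ) :
    μ'.bind κ = (μ.bind κ).withDensity
      (fun y => ∫⁻ x, μ'.rnDeriv μ x ∂(densityPosterior μ K y)) := by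
  ext s hs
  have hR : Measurable (μ'.rnDeriv μ) := Measure.measurable_rnDeriv μ' μ
  have h_meas : Measurable (Function.uncurry fun x y => μ'.rnDeriv μ x * s.indicator 1 y) :=
    (hR.comp measurable_fst).mul ((measurable_one.indicator hs).comp measurable_snd)
  calc (μ'.bind κ) s = ∫⁻ x, μ'.rnDeriv μ x * κ x s ∂μ := by
        conv_lhs => rw [← Measure.withDensity_rnDeriv_eq _ _ hμ'μ]
        rw [Measure.bind_apply hs κ.aemeasurable,
          lintegral_withDensity_eq_lintegral_mul _ hR (κ.measurable_coe hs)]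
        rfl
    _ = ∫⁻ x, ∫⁻ y, μ'.rnDeriv μ x * s.indicator 1 y ∂(κ x) ∂μ := by
        simp_rw [lintegral_const_mul _ (measurable_one.indicator hs), lintegral_indicator_one hs]
    _ = ∫⁻ y, ∫⁻ x, μ'.rnDeriv μ x * s.indicator 1 y ∂(densityPosterior μ K y) ∂(μ.bind κ) :=
        (lintegral_bind_densityPosterior hK hκ h_meas).symm
    _ = _ := by
        rw [withDensity_apply _ hs, ← lintegral_indicator hs]
        congr with y
        by_cases hy : y ∈ s <;> simp [hy]

end ProbabilityTheory

namespace InformationTheory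

variable {α β : Type*} [MeasurableSpace α] [MeasurableSpace β]

theorem klDiv_bind_lt {μ' μ : Measure α} [IsProbabilityMeasure μ'] [IsProbabilityMeasure μ]
    {Q : Measure β} [SFinite Q] {κ : Kernel α β} [IsMarkovKernel κ] {K : α → β → ℝ≥0∞}
    (hK : Measurable (Function.uncurry K)) (hK0 : ∀ x y, K x y ≠ 0)
    (hκ : ∀ x, κ x = Q.withDensity (K x)) (hμ'μ : μ' ≪ μ) (hne : μ' ≠ μ)
    (hfin : klDiv μ' μ ≠ ∞) :
    klDiv (μ'.bind κ) (μ.bind κ) < klDiv μ' μ := by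
  set R := μ'.rnDeriv μ
  set S : β → ℝ≥0∞ := fun y => ∫⁻ x, R x ∂(densityPosterior μ K y)
  have hR : Measurable R := Measure.measurable_rnDeriv μ' μ
  have h_bind : μ'.bind κ = (μ.bind κ).withDensity S :=
    bind_eq_withDensity_lintegral_rnDeriv hK hκ hμ'μ
  have h_rn : (μ'.bind κ).rnDeriv (μ.bind κ) =ᵐ[μ.bind κ] S :=
    h_bind ▸ Measure.rnDeriv_withDensity _ (measurable_lintegral_densityPosterior hK
      (hR.comp measurable_fst))
  have h_out : klDiv (μ'.bind κ) (μ.bind κ) =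
      ∫⁻ y, ENNReal.ofReal (klFun (S y).toReal) ∂(μ.bind κ) := by
    rw [klDiv_eq_lintegral_klFun_of_ac (h_bind ▸ withDensity_absolutelyContinuous _ _)]
    exact lintegral_congr_ae (h_rn.fun_comp fun r => ENNReal.ofReal (klFun r.toReal))
  have h_meas :
      Measurable (Function.uncurry fun x (_ : β) => ENNReal.ofReal (klFun (R x).toReal)) :=
    (measurable_klFun.comp hR.ennreal_toReal).ennreal_ofReal.comp measurable_fst
  have h_in : klDiv μ' μ = ∫⁻ y, ∫⁻ x, ENNReal.ofReal (klFun (R x).toReal)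
      ∂(densityPosterior μ K y) ∂(μ.bind κ) := by
    rw [klDiv_eq_lintegral_klFun_of_ac hμ'μ, lintegral_bind_densityPosterior hK hκ h_meas]
    simp only [lintegral_const, measure_univ, mul_one, R]
  have h_out_ne_top : klDiv (μ'.bind κ) (μ.bind κ) ≠ ∞ :=
    ((klDiv_comp_right_le μ' μ κ).trans_lt hfin.lt_top).ne
  rw [h_out] at h_out_ne_top
  rw [h_out, h_in]
  refine lintegral_strict_mono (IsProbabilityMeasure.ne_zero _)
    (measurable_lintegral_densityPosterior hK h_meas).aemeasurable h_out_ne_top ?_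
  filter_upwards [ae_bind_lintegral_ne_zero_ne_top hK hκ, h_rn,
    Measure.rnDeriv_lt_top (μ'.bind κ) (μ.bind κ)] with y ⟨h0, htop⟩ h_rn_y h_lt_top
  have := isProbabilityMeasure_densityPosterior h0 htop
  have h_R_lt_top : ∀ᵐ x ∂(densityPosterior μ K y), R x < ∞ :=
    densityPosterior_absolutelyContinuous y |>.ae_le (Measure.rnDeriv_lt_top μ' μ)
  have h_S : (S y).toReal = ∫ x, (R x).toReal ∂(densityPosterior μ K y) :=
    (integral_toReal hR.aemeasurable h_R_lt_top).symm
  rw [h_S]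
  refine ofReal_klFun_integral_lt_lintegral (.of_forall fun _ => ENNReal.toReal_nonneg)
    (integrable_toReal_of_lintegral_ne_top hR.aemeasurable (h_rn_y ▸ h_lt_top).ne) fun c hc => ?_
  exact Measure.not_toReal_rnDeriv_ae_eq_const hμ'μ hne c
    ((absolutelyContinuous_densityPosterior hK (hK0 · y) htop).ae_le hc)

end InformationTheory

theorem klDiv_bind_lt_of_pos_density_general {m n : ℕ}
    (k : (Fin m → ℝ) × (Fin n → ℝ) → ℝ)
    (hk_meas : Measurable k) (hk_pos : ∀ z, 0 < k z)
    (κ : Kernel (Fin m → ℝ) (Fin n → ℝ)) [IsMarkovKernel κ]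
    (hκ : ∀ x, κ x = volume.withDensity (fun y => ENNReal.ofReal (k (x, y))))
    (μ' μ : Measure (Fin m → ℝ)) [IsProbabilityMeasure μ'] [IsProbabilityMeasure μ]
    (hne : μ' ≠ μ) (hfin : klDiv μ' μ < ⊤) :
    klDiv (μ'.bind κ) (μ.bind κ) < klDiv μ' μ := by
  simp only [klDiv_eq_informationTheory_klDiv] at hfin ⊢
  have hμ'μ : μ' ≪ μ := (InformationTheory.klDiv_ne_top_iff.1 hfin.ne).1
  exact InformationTheory.klDiv_bind_lt (K := fun x y => ENNReal.ofReal (k (x, y)))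
    hk_meas.ennreal_ofReal (fun x y => (ENNReal.ofReal_pos.2 (hk_pos (x, y))).ne') hκ hμ'μ hne
    hfin.ne

/-- **Theorem 3 (Contraction of Cycle-SDEs), formal core.** A Markov kernel from `ℝ^m` to `ℝ^n`
with an everywhere strictly positive transition density strictly decreases the KL divergence
between two distinct priors with everywhere strictly positive Lebesgue densities. -/
theorem klDiv_bind_lt_of_pos_density {m n : ℕ}
    (k : (Fin m → ℝ) × (Fin n → ℝ) → ℝ)
    (hk_meas : Measurable k) (hk_pos : ∀ z, 0 < k z)
    (hk_one : ∀ x, ∫ y, k (x, y) = 1)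
    (κ : Kernel (Fin m → ℝ) (Fin n → ℝ)) [IsMarkovKernel κ]
    (hκ : ∀ x, κ x = volume.withDensity (fun y => ENNReal.ofReal (k (x, y))))
    (μ' μ : Measure (Fin m → ℝ)) [IsProbabilityMeasure μ'] [IsProbabilityMeasure μ]
    (f' f : (Fin m → ℝ) → ℝ) (hf'_meas : Measurable f') (hf_meas : Measurable f)
    (hf'_pos : ∀ x, 0 < f' x) (hf_pos : ∀ x, 0 < f x)
    (hμ' : μ' = volume.withDensity (fun x => ENNReal.ofReal (f' x)))
    (hμ : μ = volume.withDensity (fun x => ENNReal.ofReal (f x)))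
    (hne : μ' ≠ μ) (hfin : klDiv μ' μ < ⊤) :
    klDiv (μ'.bind κ) (μ.bind κ) < klDiv μ' μ :=
  klDiv_bind_lt_of_pos_density_general k hk_meas hk_pos κ hκ μ' μ hne hfin
end

section
/- Let s < t be real numbers, let F : ℝ → ℝ be differentiable on [s, t] with F(τ) ≥ 0 for all τ ∈ [s, t], and let h : ℝ → ℝ be continuous on [s, t]. If deriv F(τ) ≥ h(τ) · F(τ) for every τ ∈ [s, t], then F(s) ≤ exp(−∫_{s}^{t} h(τ) dτ) · F(t). -/
/-! The integrating factor `G x = exp (-∫ u in s..x, h u) * F x` has derivative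
`exp (-∫ u in s..x, h u) * (F' x - h x * F x) ≥ 0`, so `G` is monotone on `[s, t]` and
`F s = G s ≤ G t`. -/

open Set MeasureTheory

theorem ContinuousOn.hasDerivAt_integral_of_mem_Ioo {E : Type*} [NormedAddCommGroup E]
    [NormedSpace ℝ E] [CompleteSpace E] {h : ℝ → E} {a b x : ℝ}
    (hh : ContinuousOn h (Icc a b)) (hx : x ∈ Ioo a b) :
    HasDerivAt (fun y => ∫ u in a..y, h u) (h x) x := by
  have hax : IntervalIntegrable h volume a x :=
    (hh.mono (uIcc_of_le hx.1.le ▸ Icc_subset_Icc_right hx.2.le)).intervalIntegrable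
  have hmeas : StronglyMeasurableAtFilter h (nhds x) :=
    ⟨Ioo a b, Ioo_mem_nhds hx.1 hx.2,
      (hh.mono Ioo_subset_Icc_self).aestronglyMeasurable measurableSet_Ioo⟩
  exact intervalIntegral.integral_hasDerivAt_right hax hmeas
    (hh.continuousAt (Icc_mem_nhds hx.1 hx.2))

theorem HasDerivAt.exp_neg_mul {H F : ℝ → ℝ} {H' F' x : ℝ} (hH : HasDerivAt H H' x)
    (hF : HasDerivAt F F' x) :
    HasDerivAt (fun y => Real.exp (-H y) * F y) (Real.exp (-H x) * (F' - H' * F x)) x :=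
  (hH.neg.exp.mul hF).congr_deriv (by simp only [Pi.neg_apply]; ring)

theorem monotoneOn_exp_neg_integral_mul {a b : ℝ} {F h : ℝ → ℝ}
    (hF_cont : ContinuousOn F (Icc a b)) (hF_diff : DifferentiableOn ℝ F (Ioo a b))
    (hh : ContinuousOn h (Icc a b)) (hderiv : ∀ x ∈ Ioo a b, h x * F x ≤ deriv F x) :
    MonotoneOn (fun x => Real.exp (-∫ u in a..x, h u) * F x) (Icc a b) := by
  have hH_cont : ContinuousOn (fun x => ∫ u in a..x, h u) (Icc a b) := by
    rcases le_or_gt a b with hab | hba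
    · simpa only [uIcc_of_le hab] using
        intervalIntegral.continuousOn_primitive_interval (hh.integrableOn_Icc.mono_set
          (uIcc_of_le hab).subset)
    · simp [Icc_eq_empty_of_lt hba]
  refine monotoneOn_of_hasDerivWithinAt_nonneg (convex_Icc a b) (hH_cont.neg.rexp.mul hF_cont)
    (f' := fun x => Real.exp (-∫ u in a..x, h u) * (deriv F x - h x * F x)) ?_ ?_ <;>
    rw [interior_Icc] <;> intro x hx
  · have hFx := (hF_diff x hx).differentiableAt (Ioo_mem_nhds hx.1 hx.2)
    exact ((hh.hasDerivAt_integral_of_mem_Ioo hx).exp_neg_mul hFx.hasDerivAt).hasDerivWithinAt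
  · exact mul_nonneg (Real.exp_pos _).le (sub_nonneg.2 (hderiv x hx))

theorem le_exp_neg_integral_mul_of_deriv_ge_general (s t : ℝ) (hst : s < t) (F h : ℝ → ℝ)
    (hF_diff : DifferentiableOn ℝ F (Icc s t))
    (hh_cont : ContinuousOn h (Icc s t))
    (hderiv : ∀ τ ∈ Icc s t, h τ * F τ ≤ deriv F τ) :
    F s ≤ Real.exp (-∫ τ in s..t, h τ) * F t := by
  have hmono := monotoneOn_exp_neg_integral_mul hF_diff.continuousOn
    (hF_diff.mono Ioo_subset_Icc_self) hh_cont fun x hx => hderiv x (Ioo_subset_Icc_self hx)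
  simpa using hmono (left_mem_Icc.2 hst.le) (right_mem_Icc.2 hst.le) hst.le

/-- **Reverse Grönwall comparison (used in Proposition D.3).** If `F ≥ 0` is differentiable on
`[s,t]`, `h` is continuous on `[s,t]`, and `F' ≥ h·F` on `[s,t]`, then
`F s ≤ exp(−∫_s^t h) · F t`. -/
theorem le_exp_neg_integral_mul_of_deriv_ge (s t : ℝ) (hst : s < t) (F h : ℝ → ℝ)
    (hF_diff : DifferentiableOn ℝ F (Icc s t))
    (hF_nonneg : ∀ τ ∈ Icc s t, 0 ≤ F τ)
    (hh_cont : ContinuousOn h (Icc s t))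
    (hderiv : ∀ τ ∈ Icc s t, h τ * F τ ≤ deriv F τ) :
    F s ≤ Real.exp (-∫ τ in s..t, h τ) * F t :=
  le_exp_neg_integral_mul_of_deriv_ge_general s t hst F h hF_diff hh_cont hderiv
end
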